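/- arXiv:2410.00323 — 2 statements merged into one kernel-verified Lean document; each statement's English description precedes it below -/
import Mathlib

section
/- Let B_c ∈ ℝ^{n×m} have full row rank (B_c B_cᵀ invertible), let B_uc ∈ ℝ^{n×p}, x₀ ∈ ℝⁿ, and t_f > 0. Let u_uc : [0, t_f] → ℝ^{p} be integrable with mean value ū_uc = (1/t_f) ∫₀^{t_f} u_uc(t) dt. Consider square-integrable controlled inputs u_c : [0, t_f] → ℝ^{m} satisfying the finite-time regulation constraint x₀ + t_f B_c ū_c + t_f B_uc ū_uc = 0, where ū_c = (1/t_f) ∫₀^{t_f} u_c(t) dt. Then the infimum of ∫₀^{t_f} ‖u_c(t)‖₂² dt over all such u_c equals (1/t_f) ‖B_c† (x₀ + t_f B_uc ū_uc)‖₂², where B_c† = B_cᵀ (B_c B_cᵀ)⁻¹, and this infimum is attained by the constant controlled input u_c*(t) = −(1/t_f) B_c† (x₀ + t_f B_uc ū_uc) for all t ∈ [0, t_f]. -/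
/-! Jensen's inequality for the convex function `x ↦ ∑ i, x i ^ 2` bounds the energy of an
admissible input from below by `t_f ‖ū_c‖²`. The regulation constraint says that `-t_f ū_c`
solves `B_c y = x₀ + t_f B_uc ū_uc`; since `B_c† B_c` is an orthogonal projection, the solution
`B_c† (x₀ + t_f B_uc ū_uc)` has the least norm, so `‖B_c† (x₀ + t_f B_uc ū_uc)‖ ≤ t_f ‖ū_c‖`.
The constant input attains equality in both steps. -/

open Matrix MeasureTheory Set

lemma convexOn_univ_sum_sq {ι : Type*} [Fintype ι] :
    ConvexOn ℝ univ (fun x : ι → ℝ => ∑ i, x i ^ 2) := by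
  refine ⟨convex_univ, fun x _ y _ a b ha hb hab => ?_⟩
  have h i := (even_two.convexOn_pow (𝕜 := ℝ)).2 (mem_univ (x i)) (mem_univ (y i)) ha hb hab
  simpa [Finset.mul_sum, ← Finset.sum_add_distrib] using Finset.sum_le_sum fun i _ => h i

lemma sum_sq_setAverage_le {α ι : Type*} [MeasurableSpace α] [Fintype ι] {μ : Measure α}
    {s : Set α} {f : α → ι → ℝ} (h0 : μ s ≠ 0) (hs : μ s ≠ ⊤) (hf : IntegrableOn f s μ)
    (hf2 : IntegrableOn (fun x => ∑ i, f x i ^ 2) s μ) :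
    ∑ i, (⨍ x in s, f x ∂μ) i ^ 2 ≤ ⨍ x in s, ∑ i, f x i ^ 2 ∂μ :=
  (convexOn_univ_sum_sq (ι := ι)).map_set_average_le (by fun_prop) isClosed_univ h0 hs
    (Filter.Eventually.of_forall fun _ => mem_univ _) hf hf2

lemma sum_sq_mulVec_le_of_isIdempotentElem {n : Type*} [Fintype n] {P : Matrix n n ℝ}
    (hsymm : Pᵀ = P) (hidem : IsIdempotentElem P) (u : n → ℝ) :
    ∑ i, (P *ᵥ u) i ^ 2 ≤ ∑ i, u i ^ 2 := by
  set w := P *ᵥ u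
  have hcross : u ⬝ᵥ w = w ⬝ᵥ w :=
    calc u ⬝ᵥ w = u ⬝ᵥ (Pᵀ *ᵥ w) := by rw [hsymm, mulVec_mulVec, hidem.eq]
      _ = w ⬝ᵥ w := by rw [dotProduct_mulVec, vecMul_transpose]
  have hpyth : ∑ i, u i ^ 2 - ∑ i, w i ^ 2
      = ∑ i, (u i - w i) ^ 2 + 2 * (u ⬝ᵥ w - w ⬝ᵥ w) := by
    simp only [dotProduct, ← Finset.sum_sub_distrib, Finset.mul_sum, ← Finset.sum_add_distrib]
    exact Finset.sum_congr rfl fun i _ => by ring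
  have := Finset.sum_nonneg fun i (_ : i ∈ Finset.univ) => sq_nonneg (u i - w i)
  linarith

section RightPseudoinverse

variable {m n : Type*} [Fintype m] [Fintype n] [DecidableEq m] {B : Matrix m n ℝ}

lemma mul_transpose_mul_inv (hB : IsUnit (B * Bᵀ).det) : B * (Bᵀ * (B * Bᵀ)⁻¹) = 1 := by
  rw [← Matrix.mul_assoc, mul_nonsing_inv _ hB]

lemma transpose_mul_inv_mul_transpose :
    (Bᵀ * (B * Bᵀ)⁻¹ * B)ᵀ = Bᵀ * (B * Bᵀ)⁻¹ * B := by
  rw [transpose_mul, transpose_mul, transpose_transpose, transpose_nonsing_inv,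
    transpose_mul, transpose_transpose, Matrix.mul_assoc]

lemma isIdempotentElem_transpose_mul_inv_mul (hB : IsUnit (B * Bᵀ).det) :
    IsIdempotentElem (Bᵀ * (B * Bᵀ)⁻¹ * B) := by
  rw [IsIdempotentElem, Matrix.mul_assoc, ← Matrix.mul_assoc B, mul_transpose_mul_inv hB,
    Matrix.one_mul]

lemma sum_sq_pinv_mulVec_le (hB : IsUnit (B * Bᵀ).det) (u : n → ℝ) :
    ∑ i, ((Bᵀ * (B * Bᵀ)⁻¹) *ᵥ (B *ᵥ u)) i ^ 2 ≤ ∑ i, u i ^ 2 := by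
  rw [mulVec_mulVec]
  exact sum_sq_mulVec_le_of_isIdempotentElem transpose_mul_inv_mul_transpose
    (isIdempotentElem_transpose_mul_inv_mul hB) u

end RightPseudoinverse

lemma sum_sq_smul {ι : Type*} [Fintype ι] (c : ℝ) (x : ι → ℝ) :
    ∑ i, (c • x) i ^ 2 = c ^ 2 * ∑ i, x i ^ 2 := by
  simp [mul_pow, Finset.mul_sum]

section IntervalAverage

variable {E : Type*} [NormedAddCommGroup E] [NormedSpace ℝ E] {a : ℝ}

lemma setAverage_Icc_zero (ha : 0 < a) (f : ℝ → E) :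
    ⨍ t in Icc 0 a, f t = (1 / a) • ∫ t in Icc 0 a, f t := by
  rw [setAverage_eq, Real.volume_real_Icc_of_le ha.le, sub_zero, one_div]

lemma one_div_smul_setIntegral_Icc_const [CompleteSpace E] (ha : 0 < a) (c : E) :
    (1 / a) • ∫ _ in Icc 0 a, c = c := by
  rw [setIntegral_const, Real.volume_real_Icc_of_le ha.le, sub_zero, smul_smul,
    one_div_mul_cancel ha.ne', one_smul]

end IntervalAverage

theorem malfunctioning_energy_general
    {n m p : ℕ} (Bc : Matrix (Fin n) (Fin m) ℝ) (hBc : IsUnit (Bc * Bcᵀ).det)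
    (Buc : Matrix (Fin n) (Fin p) ℝ) (x₀ : Fin n → ℝ) (tf : ℝ) (htf : 0 < tf)
    (Bcdag : Matrix (Fin m) (Fin n) ℝ) (hBcdag : Bcdag = Bcᵀ * (Bc * Bcᵀ)⁻¹)
    (ubaruc : Fin p → ℝ) :
    IsLeast {E : ℝ | ∃ uc : ℝ → Fin m → ℝ,
        MeasureTheory.IntegrableOn uc (Set.Icc 0 tf) ∧
        MeasureTheory.IntegrableOn (fun t => ∑ i, (uc t i) ^ 2) (Set.Icc 0 tf) ∧
        x₀ + tf • Bc.mulVec ((1 / tf) • ∫ t in Set.Icc 0 tf, uc t)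
           + tf • Buc.mulVec ubaruc = 0 ∧
        E = ∫ t in Set.Icc 0 tf, ∑ i, (uc t i) ^ 2}
      ((1 / tf) * ∑ i, (Bcdag.mulVec (x₀ + tf • Buc.mulVec ubaruc) i) ^ 2) ∧
    (x₀ + tf • Bc.mulVec ((1 / tf) • ∫ _t in Set.Icc 0 tf,
          (-(1 / tf)) • Bcdag.mulVec (x₀ + tf • Buc.mulVec ubaruc))
        + tf • Buc.mulVec ubaruc = 0 ∧
     (∫ _t in Set.Icc 0 tf,
        ∑ i, (((-(1 / tf)) • Bcdag.mulVec (x₀ + tf • Buc.mulVec ubaruc)) i) ^ 2) =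
       (1 / tf) * ∑ i, (Bcdag.mulVec (x₀ + tf • Buc.mulVec ubaruc) i) ^ 2) := by
  subst hBcdag
  set v := x₀ + tf • Buc *ᵥ ubaruc
  set w := (Bcᵀ * (Bc * Bcᵀ)⁻¹) *ᵥ v
  have hfinite : volume (Icc 0 tf) ≠ ⊤ := by simp
  have hfeasible : x₀ + tf • Bc *ᵥ ((1 / tf) • ∫ _ in Icc 0 tf, (-(1 / tf)) • w)
      + tf • Buc *ᵥ ubaruc = 0 := by
    rw [one_div_smul_setIntegral_Icc_const htf, mulVec_smul, mulVec_mulVec,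
      mul_transpose_mul_inv hBc, one_mulVec, smul_smul, mul_neg, mul_one_div_cancel htf.ne',
      neg_one_smul]
    simp only [v]
    abel
  have henergy : ∫ _ in Icc 0 tf, ∑ i, ((-(1 / tf)) • w) i ^ 2 = (1 / tf) * ∑ i, w i ^ 2 := by
    rw [setIntegral_const, Real.volume_real_Icc_of_le htf.le, sub_zero, smul_eq_mul,
      sum_sq_smul]
    field_simp
  refine ⟨⟨⟨fun _ => (-(1 / tf)) • w, integrableOn_const hfinite, integrableOn_const hfinite,
    hfeasible, henergy.symm⟩, ?_⟩, hfeasible, henergy⟩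
  rintro E ⟨uc, huc, huc2, hreg, rfl⟩
  set ub := (1 / tf) • ∫ t in Icc 0 tf, uc t
  have hv : Bc *ᵥ ((-tf) • ub) = v := by
    rw [mulVec_smul]
    linear_combination (norm := module) -hreg
  have hmin : ∑ i, w i ^ 2 ≤ tf ^ 2 * ∑ i, ub i ^ 2 := by
    simpa only [hv, sum_sq_smul, neg_sq] using sum_sq_pinv_mulVec_le hBc ((-tf) • ub)
  have hjensen : ∑ i, ub i ^ 2 ≤ (1 / tf) * ∫ t in Icc 0 tf, ∑ i, uc t i ^ 2 := by
    simpa only [setAverage_Icc_zero htf, smul_eq_mul] using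
      sum_sq_setAverage_le (by simp [htf]) hfinite huc huc2
  calc (1 / tf) * ∑ i, w i ^ 2 ≤ (1 / tf) * (tf ^ 2 * ∑ i, ub i ^ 2) := by gcongr
    _ = tf * ∑ i, ub i ^ 2 := by field_simp
    _ ≤ tf * ((1 / tf) * ∫ t in Icc 0 tf, ∑ i, uc t i ^ 2) := by gcongr
    _ = ∫ t in Icc 0 tf, ∑ i, uc t i ^ 2 := by field_simp

/-- Malfunctioning energy: for the malfunctioning driftless system
`ẋ = B_c u_c + B_uc u_uc`, `x(0) = x₀`, with `B_c` of full row rank and a given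
uncontrolled input `u_uc` with mean `ū_uc`, the minimum of `∫₀^{t_f} ‖u_c(t)‖₂² dt`
over all square-integrable controlled inputs satisfying the regulation constraint
`x₀ + t_f B_c ū_c + t_f B_uc ū_uc = 0` equals
`(1/t_f) ‖B_c† (x₀ + t_f B_uc ū_uc)‖₂²` where `B_c† = B_cᵀ (B_c B_cᵀ)⁻¹`, and it is
attained by the constant controlled input
`u_c*(t) = −(1/t_f) B_c† (x₀ + t_f B_uc ū_uc)`. -/
theorem malfunctioning_energy
    {n m p : ℕ} (Bc : Matrix (Fin n) (Fin m) ℝ) (hBc : IsUnit (Bc * Bcᵀ).det)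
    (Buc : Matrix (Fin n) (Fin p) ℝ) (x₀ : Fin n → ℝ) (tf : ℝ) (htf : 0 < tf)
    (Bcdag : Matrix (Fin m) (Fin n) ℝ) (hBcdag : Bcdag = Bcᵀ * (Bc * Bcᵀ)⁻¹)
    (uuc : ℝ → Fin p → ℝ) (huuc : MeasureTheory.IntegrableOn uuc (Set.Icc 0 tf))
    (ubaruc : Fin p → ℝ) (hubaruc : ubaruc = (1 / tf) • ∫ t in Set.Icc 0 tf, uuc t) :
    IsLeast {E : ℝ | ∃ uc : ℝ → Fin m → ℝ,
        MeasureTheory.IntegrableOn uc (Set.Icc 0 tf) ∧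
        MeasureTheory.IntegrableOn (fun t => ∑ i, (uc t i) ^ 2) (Set.Icc 0 tf) ∧
        x₀ + tf • Bc.mulVec ((1 / tf) • ∫ t in Set.Icc 0 tf, uc t)
           + tf • Buc.mulVec ubaruc = 0 ∧
        E = ∫ t in Set.Icc 0 tf, ∑ i, (uc t i) ^ 2}
      ((1 / tf) * ∑ i, (Bcdag.mulVec (x₀ + tf • Buc.mulVec ubaruc) i) ^ 2) ∧
    (x₀ + tf • Bc.mulVec ((1 / tf) • ∫ _t in Set.Icc 0 tf,
          (-(1 / tf)) • Bcdag.mulVec (x₀ + tf • Buc.mulVec ubaruc))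
        + tf • Buc.mulVec ubaruc = 0 ∧
     (∫ _t in Set.Icc 0 tf,
        ∑ i, (((-(1 / tf)) • Bcdag.mulVec (x₀ + tf • Buc.mulVec ubaruc)) i) ^ 2) =
       (1 / tf) * ∑ i, (Bcdag.mulVec (x₀ + tf • Buc.mulVec ubaruc) i) ^ 2) :=
  malfunctioning_energy_general Bc hBc Buc x₀ tf htf Bcdag hBcdag ubaruc
end

section
/- Let B = [B_c, B_uc] ∈ ℝ^{n×(m+1)} with B_c ∈ ℝ^{n×m} and B_uc ∈ ℝⁿ a single column (p = 1), and suppose both B Bᵀ and B_c B_cᵀ are invertible. Set B† = Bᵀ (B Bᵀ)⁻¹, B_c† = B_cᵀ (B_c B_cᵀ)⁻¹, and L = λ_max(B_c†ᵀ B_c†). Let t_f > 0 and R > 0. Then for every x₀ ∈ ℝⁿ with ‖x₀‖₂ ≥ R, the ratio of the nominal energy E_N*(x₀, t_f) = (1/t_f) ‖B† x₀‖₂² to the worst-case total energy Ē_M(x₀, t_f) = (1/t_f) ‖B_c† x₀‖₂² + t_f (‖B_uc‖₂² + 1) + 2 |B_ucᵀ B_c†ᵀ B_c† x₀| satisfies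 E_N*(x₀, t_f) / Ē_M(x₀, t_f) ≥ R² λ_min(B†ᵀ B†) / (R² L + 2 R t_f ‖B_c†ᵀ B_c† B_uc‖₂ + t_f² (‖B_uc‖₂² + 1)); consequently the energetic resilience metric r_M(t_f, R) = inf_{‖x₀‖₂ ≥ R} E_N*(x₀, t_f) / Ē_M(x₀, t_f) is bounded below by the same quantity. -/
/-!
By the Rayleigh bounds, `‖B† x₀‖² ≥ λ_min ‖x₀‖²` and `‖B_c† x₀‖² ≤ L ‖x₀‖²`, and by
Cauchy–Schwarz the cross term is at most `‖B_c†ᵀ B_c† B_uc‖ ‖x₀‖`. With `s = ‖x₀‖` the ratio is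
therefore at least `λ_min s² / (L s² + 2 t_f ‖B_c†ᵀ B_c† B_uc‖ s + t_f² (‖B_uc‖² + 1))`, which
is increasing in `s ≥ 0`, so its value at `s = R` bounds every ratio with `‖x₀‖ ≥ R`, and
hence their infimum.
-/
open Matrix

namespace Matrix

variable {k l : Type*} [Fintype k] [Fintype l]

theorem sum_sq_mulVec_eq_dotProduct_mulVec (M : Matrix l k ℝ) (x : k → ℝ) :
    ∑ i, (M *ᵥ x) i ^ 2 = x ⬝ᵥ (Mᵀ * M) *ᵥ x := by
  rw [← mulVec_mulVec, dotProduct_mulVec, vecMul_transpose]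
  simp only [dotProduct, sq]

theorem abs_dotProduct_le_sqrt_mul_sqrt (v w : k → ℝ) :
    |v ⬝ᵥ w| ≤ √(∑ i, v i ^ 2) * √(∑ i, w i ^ 2) := by
  rw [← Real.sqrt_mul (by positivity), ← Real.sqrt_sq_eq_abs]
  exact Real.sqrt_le_sqrt (Finset.sum_mul_sq_le_sq_mul_sq _ _ _)

theorem abs_dotProduct_transpose_mulVec_mulVec_le (M : Matrix l k ℝ) (u x : k → ℝ) :
    |u ⬝ᵥ Mᵀ *ᵥ (M *ᵥ x)| ≤
      √(∑ i, (Mᵀ *ᵥ (M *ᵥ u)) i ^ 2) * √(∑ i, x i ^ 2) := by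
  have hsymm : u ⬝ᵥ Mᵀ *ᵥ (M *ᵥ x) = Mᵀ *ᵥ (M *ᵥ u) ⬝ᵥ x := by
    rw [dotProduct_mulVec u, vecMul_transpose, dotProduct_mulVec, ← mulVec_transpose]
  rw [hsymm]
  exact abs_dotProduct_le_sqrt_mul_sqrt _ _

namespace IsHermitian

variable [DecidableEq k] {A : Matrix k k ℝ} (hA : A.IsHermitian)

theorem exists_dotProduct_mulVec_eq_sum_eigenvalues (x : k → ℝ) :
    ∃ y : k → ℝ, x ⬝ᵥ A *ᵥ x = ∑ i, hA.eigenvalues i * y i ^ 2 ∧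
      ∑ i, y i ^ 2 = ∑ i, x i ^ 2 := by
  set U : Matrix k k ℝ := (hA.eigenvectorUnitary : Matrix k k ℝ)
  have hUT : star U = Uᵀ := conjTranspose_eq_transpose_of_trivial U
  have hUU : Uᵀᵀ * Uᵀ = 1 := by
    rw [transpose_transpose, ← hUT]
    exact mem_unitaryGroup_iff.mp hA.eigenvectorUnitary.2
  refine ⟨Uᵀ *ᵥ x, ?_, ?_⟩
  · conv_lhs => rw [hA.spectral_theorem, Unitary.conjStarAlgAut_apply]
    rw [← mulVec_mulVec, ← mulVec_mulVec, dotProduct_mulVec, ← mulVec_transpose, hUT]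
    simp only [dotProduct, RCLike.ofReal_real_eq_id, CompTriple.comp_eq, mulVec_diagonal,
      mul_left_comm, sq]
    rfl
  · rw [sum_sq_mulVec_eq_dotProduct_mulVec, hUU, one_mulVec]
    simp only [dotProduct, sq]

theorem iInf_eigenvalues_mul_le_dotProduct_mulVec (x : k → ℝ) :
    (⨅ i, hA.eigenvalues i) * ∑ i, x i ^ 2 ≤ x ⬝ᵥ A *ᵥ x := by
  obtain ⟨y, hquad, hnorm⟩ := hA.exists_dotProduct_mulVec_eq_sum_eigenvalues x
  rw [hquad, ← hnorm, Finset.mul_sum]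
  gcongr with i
  exact ciInf_le (Finite.bddBelow_range _) i

theorem dotProduct_mulVec_le_iSup_eigenvalues_mul (x : k → ℝ) :
    x ⬝ᵥ A *ᵥ x ≤ (⨆ i, hA.eigenvalues i) * ∑ i, x i ^ 2 := by
  obtain ⟨y, hquad, hnorm⟩ := hA.exists_dotProduct_mulVec_eq_sum_eigenvalues x
  rw [hquad, ← hnorm, Finset.mul_sum]
  gcongr with i
  exact le_ciSup (Finite.bddAbove_range _) i

end IsHermitian

end Matrix

theorem monotoneOn_sq_div_quadratic {a b c : ℝ} (ha : 0 ≤ a) (hb : 0 ≤ b) (hc : 0 < c) :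
    MonotoneOn (fun R => R ^ 2 / (a * R ^ 2 + b * R + c)) (Set.Ici 0) := by
  intro R (hR : 0 ≤ R) s (hs : 0 ≤ s) hRs
  rw [div_le_div_iff₀ (by positivity) (by positivity)]
  nlinarith [mul_nonneg (mul_nonneg hb (mul_nonneg hR hs)) (sub_nonneg.2 hRs),
    mul_nonneg hc.le (mul_nonneg (sub_nonneg.2 hRs) (add_nonneg hR hs))]

section Energy

variable {ι κ k : Type*} [Fintype ι] [Fintype κ] [Fintype k]

noncomputable def nominalEnergy (Bdag : Matrix ι k ℝ) (tf : ℝ) (x₀ : k → ℝ) : ℝ :=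
  (1 / tf) * ∑ i, (Bdag *ᵥ x₀) i ^ 2

noncomputable def worstCaseEnergy (Bcdag : Matrix κ k ℝ) (Buc : k → ℝ) (tf : ℝ) (x₀ : k → ℝ) :
    ℝ :=
  (1 / tf) * (∑ i, (Bcdag *ᵥ x₀) i ^ 2) + tf * ((∑ i, Buc i ^ 2) + 1)
    + 2 * |Buc ⬝ᵥ Bcdagᵀ *ᵥ (Bcdag *ᵥ x₀)|

theorem div_le_nominalEnergy_div_worstCaseEnergy [DecidableEq k] (Bdag : Matrix ι k ℝ)
    (Bcdag : Matrix κ k ℝ) (Buc : k → ℝ) (hH : (Bdagᵀ * Bdag).IsHermitian)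
    (hHc : (Bcdagᵀ * Bcdag).IsHermitian) {tf R : ℝ} (htf : 0 < tf) (hR : 0 ≤ R) {x₀ : k → ℝ}
    (hx₀ : R ≤ √(∑ i, x₀ i ^ 2)) :
    R ^ 2 * (⨅ i, hH.eigenvalues i) /
        (R ^ 2 * (⨆ i, hHc.eigenvalues i)
          + 2 * R * tf * √(∑ i, (Bcdagᵀ *ᵥ (Bcdag *ᵥ Buc)) i ^ 2)
          + tf ^ 2 * ((∑ i, Buc i ^ 2) + 1)) ≤
      nominalEnergy Bdag tf x₀ / worstCaseEnergy Bcdag Buc tf x₀ := by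
  set lam := ⨅ i, hH.eigenvalues i
  set mu := ⨆ i, hHc.eigenvalues i
  set c := √(∑ i, (Bcdagᵀ *ᵥ (Bcdag *ᵥ Buc)) i ^ 2)
  set d := (∑ i, Buc i ^ 2) + 1
  set s := √(∑ i, x₀ i ^ 2)
  have hs : s ^ 2 = ∑ i, x₀ i ^ 2 := Real.sq_sqrt (by positivity)
  have hlam : 0 ≤ lam := Real.iInf_nonneg fun i =>
    (posSemidef_conjTranspose_mul_self Bdag).eigenvalues_nonneg i
  have hmu : 0 ≤ mu := Real.iSup_nonneg fun i =>
    (posSemidef_conjTranspose_mul_self Bcdag).eigenvalues_nonneg i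
  have hnominal : lam * s ^ 2 ≤ ∑ i, (Bdag *ᵥ x₀) i ^ 2 := by
    rw [hs, sum_sq_mulVec_eq_dotProduct_mulVec]
    exact hH.iInf_eigenvalues_mul_le_dotProduct_mulVec x₀
  have hcontrolled : ∑ i, (Bcdag *ᵥ x₀) i ^ 2 ≤ mu * s ^ 2 := by
    rw [hs, sum_sq_mulVec_eq_dotProduct_mulVec]
    exact hHc.dotProduct_mulVec_le_iSup_eigenvalues_mul x₀
  have hcross := abs_dotProduct_transpose_mulVec_mulVec_le Bcdag Buc x₀
  calc R ^ 2 * lam / (R ^ 2 * mu + 2 * R * tf * c + tf ^ 2 * d)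
      = lam * (R ^ 2 / (mu * R ^ 2 + 2 * tf * c * R + tf ^ 2 * d)) := by ring
    _ ≤ lam * (s ^ 2 / (mu * s ^ 2 + 2 * tf * c * s + tf ^ 2 * d)) := by
      refine mul_le_mul_of_nonneg_left ?_ hlam
      exact monotoneOn_sq_div_quadratic (b := 2 * tf * c) hmu (by positivity) (by positivity) hR
        (hR.trans hx₀) hx₀
    _ ≤ (∑ i, (Bdag *ᵥ x₀) i ^ 2) / (∑ i, (Bcdag *ᵥ x₀) i ^ 2 + tf ^ 2 * d
          + 2 * tf * |Buc ⬝ᵥ Bcdagᵀ *ᵥ (Bcdag *ᵥ x₀)|) := by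
      rw [← mul_div_assoc]
      apply div_le_div₀ (by positivity) hnominal (by positivity)
      linarith [mul_le_mul_of_nonneg_left hcross (by positivity : (0 : ℝ) ≤ 2 * tf)]
    _ = nominalEnergy Bdag tf x₀ / worstCaseEnergy Bcdag Buc tf x₀ := by
      unfold nominalEnergy worstCaseEnergy
      rw [← mul_div_mul_left _ _ (one_div_ne_zero htf.ne')]
      congr 1
      field_simp
      rfl

end Energy

theorem energetic_resilience_bound_general
    {n m : ℕ} (Buc : Fin n → ℝ)
    (Bdag : Matrix (Fin m ⊕ Fin 1) (Fin n) ℝ)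
    (Bcdag : Matrix (Fin m) (Fin n) ℝ)
    (hH : (Bdagᵀ * Bdag).IsHermitian) (hHc : (Bcdagᵀ * Bcdag).IsHermitian)
    (tf R : ℝ) (htf : 0 < tf) (hR : 0 < R) :
    (∀ x₀ : Fin n → ℝ, R ≤ Real.sqrt (∑ i, (x₀ i) ^ 2) →
      ((1 / tf) * ∑ i, (Bdag.mulVec x₀ i) ^ 2) /
        ((1 / tf) * (∑ i, (Bcdag.mulVec x₀ i) ^ 2)
          + tf * ((∑ i, (Buc i) ^ 2) + 1)
          + 2 * |Buc ⬝ᵥ Bcdagᵀ.mulVec (Bcdag.mulVec x₀)|)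
      ≥ R ^ 2 * (⨅ i, hH.eigenvalues i) /
          (R ^ 2 * (⨆ i, hHc.eigenvalues i)
            + 2 * R * tf * Real.sqrt (∑ i, (Bcdagᵀ.mulVec (Bcdag.mulVec Buc) i) ^ 2)
            + tf ^ 2 * ((∑ i, (Buc i) ^ 2) + 1))) ∧
    sInf {r : ℝ | ∃ x₀ : Fin n → ℝ, R ≤ Real.sqrt (∑ i, (x₀ i) ^ 2) ∧
        r = ((1 / tf) * ∑ i, (Bdag.mulVec x₀ i) ^ 2) /
          ((1 / tf) * (∑ i, (Bcdag.mulVec x₀ i) ^ 2)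
            + tf * ((∑ i, (Buc i) ^ 2) + 1)
            + 2 * |Buc ⬝ᵥ Bcdagᵀ.mulVec (Bcdag.mulVec x₀)|)}
      ≥ R ^ 2 * (⨅ i, hH.eigenvalues i) /
          (R ^ 2 * (⨆ i, hHc.eigenvalues i)
            + 2 * R * tf * Real.sqrt (∑ i, (Bcdagᵀ.mulVec (Bcdag.mulVec Buc) i) ^ 2)
            + tf ^ 2 * ((∑ i, (Buc i) ^ 2) + 1)) := by
  have hratio := fun (x₀ : Fin n → ℝ) (hx₀ : R ≤ √(∑ i, x₀ i ^ 2)) =>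
    div_le_nominalEnergy_div_worstCaseEnergy Bdag Bcdag Buc hH hHc htf hR.le hx₀
  refine ⟨hratio, ?_⟩
  rcases isEmpty_or_nonempty (Fin n) with hn | ⟨⟨i⟩⟩
  · have hempty : ∀ x₀ : Fin n → ℝ, ¬R ≤ √(∑ i, x₀ i ^ 2) := by simp [hR]
    rw [Real.iInf_of_isEmpty, mul_zero, zero_div]
    exact Real.sInf_nonneg fun r ⟨x₀, hx₀, _⟩ => absurd hx₀ (hempty x₀)
  · refine le_csInf ⟨_, Pi.single i R, ?_, rfl⟩ ?_
    · simp [Pi.single_apply, ite_pow, hR.le]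
    · rintro r ⟨x₀, hx₀, rfl⟩
      exact hratio x₀ hx₀

/-- Bound on the energetic resilience metric for the loss of one actuator
(Proposition 2): with `B = [B_c, B_uc]`, `B Bᵀ` and `B_c B_cᵀ` invertible,
`B† = Bᵀ (B Bᵀ)⁻¹`, `B_c† = B_cᵀ (B_c B_cᵀ)⁻¹`, `L = λ_max(B_c†ᵀ B_c†)`, `t_f > 0` and
`R > 0`, for every `x₀` with `‖x₀‖₂ ≥ R` the ratio of the nominal energy
`E_N* = (1/t_f) ‖B† x₀‖₂²` to the worst-case total energy
`Ē_M = (1/t_f) ‖B_c† x₀‖₂² + t_f (‖B_uc‖₂² + 1) + 2 |B_ucᵀ B_c†ᵀ B_c† x₀|` is at least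
`R² λ_min(B†ᵀ B†) / (R² L + 2 R t_f ‖B_c†ᵀ B_c† B_uc‖₂ + t_f² (‖B_uc‖₂² + 1))`; hence
the energetic resilience metric `r_M(t_f, R) = inf_{‖x₀‖₂ ≥ R} E_N*/Ē_M` is bounded
below by the same quantity. -/
theorem energetic_resilience_bound
    {n m : ℕ} (Bc : Matrix (Fin n) (Fin m) ℝ) (Buc : Fin n → ℝ)
    (B : Matrix (Fin n) (Fin m ⊕ Fin 1) ℝ)
    (hBdef : B = Matrix.fromCols Bc (Matrix.of fun i (_ : Fin 1) => Buc i))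
    (hB : IsUnit (B * Bᵀ).det) (hBc : IsUnit (Bc * Bcᵀ).det)
    (Bdag : Matrix (Fin m ⊕ Fin 1) (Fin n) ℝ) (hBdag : Bdag = Bᵀ * (B * Bᵀ)⁻¹)
    (Bcdag : Matrix (Fin m) (Fin n) ℝ) (hBcdag : Bcdag = Bcᵀ * (Bc * Bcᵀ)⁻¹)
    (hH : (Bdagᵀ * Bdag).IsHermitian) (hHc : (Bcdagᵀ * Bcdag).IsHermitian)
    (tf R : ℝ) (htf : 0 < tf) (hR : 0 < R) :
    (∀ x₀ : Fin n → ℝ, R ≤ Real.sqrt (∑ i, (x₀ i) ^ 2) →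
      ((1 / tf) * ∑ i, (Bdag.mulVec x₀ i) ^ 2) /
        ((1 / tf) * (∑ i, (Bcdag.mulVec x₀ i) ^ 2)
          + tf * ((∑ i, (Buc i) ^ 2) + 1)
          + 2 * |Buc ⬝ᵥ Bcdagᵀ.mulVec (Bcdag.mulVec x₀)|)
      ≥ R ^ 2 * (⨅ i, hH.eigenvalues i) /
          (R ^ 2 * (⨆ i, hHc.eigenvalues i)
            + 2 * R * tf * Real.sqrt (∑ i, (Bcdagᵀ.mulVec (Bcdag.mulVec Buc) i) ^ 2)
            + tf ^ 2 * ((∑ i, (Buc i) ^ 2) + 1))) ∧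
    sInf {r : ℝ | ∃ x₀ : Fin n → ℝ, R ≤ Real.sqrt (∑ i, (x₀ i) ^ 2) ∧
        r = ((1 / tf) * ∑ i, (Bdag.mulVec x₀ i) ^ 2) /
          ((1 / tf) * (∑ i, (Bcdag.mulVec x₀ i) ^ 2)
            + tf * ((∑ i, (Buc i) ^ 2) + 1)
            + 2 * |Buc ⬝ᵥ Bcdagᵀ.mulVec (Bcdag.mulVec x₀)|)}
      ≥ R ^ 2 * (⨅ i, hH.eigenvalues i) /
          (R ^ 2 * (⨆ i, hHc.eigenvalues i)
            + 2 * R * tf * Real.sqrt (∑ i, (Bcdagᵀ.mulVec (Bcdag.mulVec Buc) i) ^ 2)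
            + tf ^ 2 * ((∑ i, (Buc i) ^ 2) + 1)) :=
  energetic_resilience_bound_general Buc Bdag Bcdag hH hHc tf R htf hR
end
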